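/- arXiv:1705.05445 — 4 statements merged into one kernel-verified Lean document; each statement's English description precedes it below -/
import Mathlib

section
/- Call a set Λ' of weights root-distinct if η − ν is not a root for any pair η, ν ∈ Λ'. If Ψ is a unit vector whose support Σ(Ψ) = {η : ⟨η|Ψ⟩ ≠ 0} (with respect to a weight basis) is root-distinct, then μ(Ψ) lies in the Cartan subalgebra 𝔱 and equals Σ_{η∈Σ(Ψ)} |⟨η|Ψ⟩|² η. In particular every weight vector |η⟩ is mapped by μ to its weight η. -/
/- STATEMENT 4: if the support of a unit vector Ψ (w.r.t. a weight basis) is root-distinct,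
then μ(Ψ) lies in the Cartan subalgebra 𝔱 and equals Σ_{η ∈ Σ(Ψ)} |⟨η|Ψ⟩|² η.
The Lie algebra 𝔨 is an abstract real inner product space acting on H through π by
skew-hermitian operators; weights (w i) are elements of 𝔱 ⊆ 𝔨; root operators E_α shift
weight spaces by the root rootOf α, and the 𝔱-orthocomplement of 𝔨 acts through the
complex span of the root operators. -/

local notation "⟪" x ", " y "⟫_ℂ" => @inner ℂ _ _ x y
local notation "⟪" x ", " y "⟫_ℝ" => @inner ℝ _ _ x y

theorem root_distinct_support_momentum
    {H : Type*} [NormedAddCommGroup H] [InnerProductSpace ℂ H] [FiniteDimensional ℂ H]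
    {𝔨 : Type*} [NormedAddCommGroup 𝔨] [InnerProductSpace ℝ 𝔨] [FiniteDimensional ℝ 𝔨]
    {ι : Type*} [Fintype ι]
    -- the representation of 𝔨 on H
    (π : 𝔨 →ₗ[ℝ] (H →ₗ[ℂ] H))
    -- the Cartan subalgebra
    (𝔱 : Submodule ℝ 𝔨)
    -- weight basis and weights (weights are identified with elements of 𝔱)
    (b : OrthonormalBasis ι ℂ H) (w : ι → 𝔨) (hw : ∀ i, w i ∈ 𝔱)
    -- Cartan elements act diagonally with eigenvalue i·(w i, ξ)
    (htorus : ∀ ξ ∈ 𝔱, ∀ i, π ξ (b i) = (Complex.I * ((⟪w i, ξ⟫_ℝ : ℝ) : ℂ)) • b i)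
    -- root operators: E_α maps the weight space of η into the weight space of η + α
    {Δ : Type*} (E : Δ → (H →ₗ[ℂ] H)) (rootOf : Δ → 𝔨)
    (hshift : ∀ (α : Δ) (i j : ι), ⟪b j, E α (b i)⟫_ℂ ≠ 0 → w j = w i + rootOf α)
    -- elements of 𝔨 orthogonal to 𝔱 act through the span of the root operators
    (hcompl : ∀ Z ∈ 𝔱ᗮ, π Z ∈ Submodule.span ℂ (Set.range E))
    -- the momentum map and its defining property on unit vectors
    (μ : H → 𝔨)
    (hμ : ∀ Ψ : H, ‖Ψ‖ = 1 → ∀ X : 𝔨, ⟪μ Ψ, X⟫_ℝ = (⟪Ψ, π X Ψ⟫_ℂ / Complex.I).re)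
    -- a unit vector whose support is root-distinct
    (Ψ : H) (hΨ : ‖Ψ‖ = 1)
    (hrd : ∀ i j : ι, ⟪b i, Ψ⟫_ℂ ≠ 0 → ⟪b j, Ψ⟫_ℂ ≠ 0 → ∀ α : Δ, w i - w j ≠ rootOf α) :
    μ Ψ ∈ 𝔱 ∧ μ Ψ = ∑ i, (‖⟪b i, Ψ⟫_ℂ‖ ^ 2) • w i := by
  classical
  set c : ι → ℂ := fun i => ⟪b i, Ψ⟫_ℂ with hc
  have hΨexp : Ψ = ∑ i, c i • b i := (b.sum_repr' Ψ).symm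
  have hortho : ∀ i j : ι, ⟪b i, b j⟫_ℂ = if i = j then 1 else 0 := fun i j =>
    orthonormal_iff_ite.mp b.orthonormal i j
  have hconjmul : ∀ z : ℂ, starRingEnd ℂ z * z = ((‖z‖ ^ 2 : ℝ) : ℂ) := by
    intro z
    rw [mul_comm, Complex.mul_conj']
    norm_cast
  have expand : ∀ x : H, ⟪Ψ, x⟫_ℂ = ∑ j, starRingEnd ℂ (c j) * ⟪b j, x⟫_ℂ := by
    intro x
    conv_lhs => rw [hΨexp]
    rw [sum_inner]
    exact Finset.sum_congr rfl fun j _ => inner_smul_left _ _ _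
  -- the functional L ↦ ⟪Ψ, L Ψ⟫ is ℂ-linear
  set f : (H →ₗ[ℂ] H) →ₗ[ℂ] ℂ :=
    (innerSL ℂ Ψ).toLinearMap.comp (LinearMap.applyₗ Ψ) with hf
  have hfapp : ∀ L : H →ₗ[ℂ] H, f L = ⟪Ψ, L Ψ⟫_ℂ := fun L => rfl
  -- the root operators kill Ψ's expectation
  have hEzero : ∀ α : Δ, ⟪Ψ, E α Ψ⟫_ℂ = 0 := by
    intro α
    rw [expand]
    apply Finset.sum_eq_zero
    intro j _
    have hEexp : ⟪b j, E α Ψ⟫_ℂ = ∑ i, c i * ⟪b j, E α (b i)⟫_ℂ := by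
      conv_lhs => rw [hΨexp]
      rw [map_sum, inner_sum]
      exact Finset.sum_congr rfl fun i _ => by rw [map_smul, inner_smul_right]
    rw [hEexp, Finset.mul_sum]
    apply Finset.sum_eq_zero
    intro i _
    by_cases hci : c i = 0
    · simp [hci]
    by_cases hcj : c j = 0
    · simp [hcj]
    have hin : ⟪b j, E α (b i)⟫_ℂ = 0 := by
      by_contra h
      exact hrd j i hcj hci α (by rw [hshift α i j h]; abel)
    simp [hin]
  -- hence 𝔱ᗮ elements have zero expectation
  have hcompl0 : ∀ Z ∈ 𝔱ᗮ, ⟪Ψ, π Z Ψ⟫_ℂ = 0 := by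
    intro Z hZ
    have hsub : Submodule.span ℂ (Set.range E) ≤ LinearMap.ker f := by
      rw [Submodule.span_le]
      rintro _ ⟨α, rfl⟩
      simpa [hfapp] using hEzero α
    have := hsub (hcompl Z hZ)
    simpa [hfapp] using this
  -- torus expectation
  have htor : ∀ ξ ∈ 𝔱, ⟪Ψ, π ξ Ψ⟫_ℂ =
      Complex.I * ((∑ i, ‖c i‖ ^ 2 * ⟪w i, ξ⟫_ℝ : ℝ) : ℂ) := by
    intro ξ hξ
    have h2 : ∀ j, ⟪b j, π ξ Ψ⟫_ℂ = c j * (Complex.I * ((⟪w j, ξ⟫_ℝ : ℝ) : ℂ)) := by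
      intro j
      conv_lhs => rw [hΨexp]
      rw [map_sum, inner_sum]
      have : ∀ i, ⟪b j, π ξ (c i • b i)⟫_ℂ
          = c i * (Complex.I * ((⟪w i, ξ⟫_ℝ : ℝ) : ℂ)) * ⟪b j, b i⟫_ℂ := by
        intro i
        rw [map_smul, inner_smul_right, htorus ξ hξ i, inner_smul_right]
        ring
      rw [Finset.sum_congr rfl fun i _ => this i]
      simp [hortho]
    rw [expand, Finset.sum_congr rfl fun j _ => by rw [h2 j]]
    have : ∀ j : ι, starRingEnd ℂ (c j) * (c j * (Complex.I * ((⟪w j, ξ⟫_ℝ : ℝ) : ℂ)))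
        = Complex.I * ((‖c j‖ ^ 2 * ⟪w j, ξ⟫_ℝ : ℝ) : ℂ) := by
      intro j
      rw [show starRingEnd ℂ (c j) * (c j * (Complex.I * ((⟪w j, ξ⟫_ℝ : ℝ) : ℂ)))
          = (starRingEnd ℂ (c j) * c j) * (Complex.I * ((⟪w j, ξ⟫_ℝ : ℝ) : ℂ)) by ring,
        hconjmul]
      push_cast
      ring
    rw [Finset.sum_congr rfl fun j _ => this j, ← Finset.mul_sum]
    push_cast
    ring
  -- the candidate value
  set v : 𝔨 := ∑ i, (‖c i‖ ^ 2 : ℝ) • w i with hv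
  have hvmem : v ∈ 𝔱 := Submodule.sum_mem _ fun i _ => Submodule.smul_mem _ _ (hw i)
  have hμeq : μ Ψ = v := by
    apply ext_inner_right ℝ
    intro X
    obtain ⟨x, hx, y, hy, hxy⟩ := 𝔱.exists_add_mem_mem_orthogonal X
    have h1 : ⟪μ Ψ, x⟫_ℝ = ⟪v, x⟫_ℝ := by
      rw [hμ Ψ hΨ x, htor x hx, mul_comm, mul_div_assoc, div_self Complex.I_ne_zero,
        mul_one, Complex.ofReal_re, hv, sum_inner]
      exact Finset.sum_congr rfl fun i _ => (real_inner_smul_left _ _ _).symm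
    have h2 : ⟪μ Ψ, y⟫_ℝ = ⟪v, y⟫_ℝ := by
      rw [hμ Ψ hΨ y, hcompl0 y hy, Submodule.inner_right_of_mem_orthogonal hvmem hy]
      simp
    rw [hxy, inner_add_right, inner_add_right, h1, h2]
  exact ⟨hμeq ▸ hvmem, hμeq⟩
end

section
/- Let H = H₁ ⊕ H₂ be a direct sum of unitary representations of a compact group K, with momentum map μ. Then the momentum image of the unit sphere of H equals the join of the momentum images of the summands: μ(H) = { tX₁ + (1−t)X₂ : 0 ≤ t ≤ 1, X₁ ∈ μ(H₁), X₂ ∈ μ(H₂) }. -/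
/-! A unit vector of `H₁ ⊕ H₂` is `a • Ψ₁ + b • Ψ₂` with `Ψᵢ` unit vectors of `Hᵢ` and
`a ^ 2 + b ^ 2 = 1`, `a, b ≥ 0`. Since `π X` preserves both summands and they are orthogonal, the
cross terms of `⟪Ψ, π X Ψ⟫` vanish, so `μ (a • Ψ₁ + b • Ψ₂) = a ^ 2 • μ Ψ₁ + b ^ 2 • μ Ψ₂`.
Reading this identity in both directions (with `t = a ^ 2`) gives the two inclusions. -/

local notation "⟪" x ", " y "⟫_ℂ" => @inner ℂ _ _ x y
local notation "⟪" x ", " y "⟫_ℝ" => @inner ℝ _ _ x y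

section InnerProductSpace

variable {H : Type*} [NormedAddCommGroup H] [InnerProductSpace ℂ H]

lemma Submodule.exists_norm_eq_one_and_eq_norm_smul {K : Submodule ℂ H} (hK : K ≠ ⊥)
    {x : H} (hx : x ∈ K) : ∃ u ∈ K, ‖u‖ = 1 ∧ x = (‖x‖ : ℂ) • u := by
  by_cases hx0 : x = 0
  · obtain ⟨v, hv, hv0⟩ := Submodule.exists_mem_ne_zero_of_ne_bot hK
    exact ⟨(‖v‖⁻¹ : ℂ) • v, K.smul_mem _ hv, norm_smul_inv_norm hv0, by simp [hx0]⟩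
  · refine ⟨(‖x‖⁻¹ : ℂ) • x, K.smul_mem _ hx, norm_smul_inv_norm hx0, ?_⟩
    rw [smul_smul, mul_inv_cancel₀ (by simpa using hx0), one_smul]

lemma norm_sq_add_norm_sq_of_norm_add_eq_one {x y : H} (hxy : ⟪x, y⟫_ℂ = 0)
    (h : ‖x + y‖ = 1) : ‖x‖ ^ 2 + ‖y‖ ^ 2 = 1 := by
  have := norm_add_sq_eq_norm_sq_add_norm_sq_of_inner_eq_zero x y hxy
  rw [h] at this
  nlinarith

lemma norm_ofReal_smul_add_ofReal_smul {u₁ u₂ : H} (hu : ⟪u₁, u₂⟫_ℂ = 0)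
    (n₁ : ‖u₁‖ = 1) (n₂ : ‖u₂‖ = 1) {a b : ℝ} (hab : a ^ 2 + b ^ 2 = 1) :
    ‖(a : ℂ) • u₁ + (b : ℂ) • u₂‖ = 1 := by
  have horth : ⟪(a : ℂ) • u₁, (b : ℂ) • u₂⟫_ℂ = 0 := by
    rw [inner_smul_left, inner_smul_right, hu, mul_zero, mul_zero]
  have hsq := norm_add_sq_eq_norm_sq_add_norm_sq_of_inner_eq_zero _ _ horth
  simp only [norm_smul, Complex.norm_real, Real.norm_eq_abs, n₁, n₂, mul_one] at hsq
  refine (pow_eq_one_iff_of_nonneg (norm_nonneg _) two_ne_zero).mp ?_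
  nlinarith [sq_abs a, sq_abs b]

lemma inner_add_map_add_of_mem {H₁ H₂ : Submodule ℂ H}
    (hortho : ∀ x ∈ H₁, ∀ y ∈ H₂, ⟪x, y⟫_ℂ = 0) (T : H →ₗ[ℂ] H)
    (hT₁ : ∀ x ∈ H₁, T x ∈ H₁) (hT₂ : ∀ y ∈ H₂, T y ∈ H₂)
    {x y : H} (hx : x ∈ H₁) (hy : y ∈ H₂) :
    ⟪x + y, T (x + y)⟫_ℂ = ⟪x, T x⟫_ℂ + ⟪y, T y⟫_ℂ := by
  have hxTy : ⟪x, T y⟫_ℂ = 0 := hortho _ hx _ (hT₂ _ hy)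
  have hyTx : ⟪y, T x⟫_ℂ = 0 := by
    rw [← inner_conj_symm, hortho _ (hT₁ _ hx) _ hy, map_zero]
  rw [map_add, inner_add_left, inner_add_right, inner_add_right, hxTy, hyTx]
  ring

lemma inner_ofReal_smul_map_ofReal_smul (T : H →ₗ[ℂ] H) (a : ℝ) (x : H) :
    ⟪(a : ℂ) • x, T ((a : ℂ) • x)⟫_ℂ = ((a ^ 2 : ℝ) : ℂ) * ⟪x, T x⟫_ℂ := by
  rw [map_smul, inner_smul_left, inner_smul_right, Complex.conj_ofReal]
  push_cast
  ring

end InnerProductSpace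

lemma momentum_ofReal_smul_add_ofReal_smul
    {H : Type*} [NormedAddCommGroup H] [InnerProductSpace ℂ H]
    {𝔨 : Type*} [NormedAddCommGroup 𝔨] [InnerProductSpace ℝ 𝔨]
    (π : 𝔨 →ₗ[ℝ] (H →ₗ[ℂ] H)) {H₁ H₂ : Submodule ℂ H}
    (hortho : ∀ x ∈ H₁, ∀ y ∈ H₂, ⟪x, y⟫_ℂ = 0)
    (hinv₁ : ∀ X : 𝔨, ∀ x ∈ H₁, π X x ∈ H₁) (hinv₂ : ∀ X : 𝔨, ∀ y ∈ H₂, π X y ∈ H₂)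
    (μ : H → 𝔨)
    (hμ : ∀ Ψ : H, ‖Ψ‖ = 1 → ∀ X : 𝔨, ⟪μ Ψ, X⟫_ℝ = (⟪Ψ, π X Ψ⟫_ℂ / Complex.I).re)
    {u₁ u₂ : H} (h₁ : u₁ ∈ H₁) (h₂ : u₂ ∈ H₂) (n₁ : ‖u₁‖ = 1) (n₂ : ‖u₂‖ = 1)
    {a b : ℝ} (hab : a ^ 2 + b ^ 2 = 1) :
    μ ((a : ℂ) • u₁ + (b : ℂ) • u₂) = a ^ 2 • μ u₁ + b ^ 2 • μ u₂ := by
  have hn := norm_ofReal_smul_add_ofReal_smul (hortho _ h₁ _ h₂) n₁ n₂ hab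
  refine ext_inner_right ℝ fun X => ?_
  calc ⟪μ ((a : ℂ) • u₁ + (b : ℂ) • u₂), X⟫_ℝ
      = (((a ^ 2 : ℝ) : ℂ) * ⟪u₁, π X u₁⟫_ℂ / Complex.I
          + ((b ^ 2 : ℝ) : ℂ) * ⟪u₂, π X u₂⟫_ℂ / Complex.I).re := by
        rw [hμ _ hn, inner_add_map_add_of_mem hortho (π X) (hinv₁ X) (hinv₂ X)
          (H₁.smul_mem _ h₁) (H₂.smul_mem _ h₂), inner_ofReal_smul_map_ofReal_smul,
          inner_ofReal_smul_map_ofReal_smul, add_div]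
    _ = ⟪a ^ 2 • μ u₁ + b ^ 2 • μ u₂, X⟫_ℝ := by
        rw [inner_add_left, real_inner_smul_left, real_inner_smul_left, hμ _ n₁, hμ _ n₂,
          mul_div_assoc, mul_div_assoc, Complex.add_re, Complex.re_ofReal_mul,
          Complex.re_ofReal_mul]

theorem momentum_image_direct_sum_join_general
    {H : Type*} [NormedAddCommGroup H] [InnerProductSpace ℂ H]
    {𝔨 : Type*} [NormedAddCommGroup 𝔨] [InnerProductSpace ℝ 𝔨]
    -- the representation of the Lie algebra 𝔨 on H
    (π : 𝔨 →ₗ[ℝ] (H →ₗ[ℂ] H))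
    -- two orthogonal, nonzero, invariant summands with H₁ ⊕ H₂ = H
    (H₁ H₂ : Submodule ℂ H)
    (hne₁ : H₁ ≠ ⊥) (hne₂ : H₂ ≠ ⊥)
    (hortho : ∀ x ∈ H₁, ∀ y ∈ H₂, ⟪x, y⟫_ℂ = 0)
    (hsum : H₁ ⊔ H₂ = ⊤)
    (hinv₁ : ∀ X : 𝔨, ∀ x ∈ H₁, π X x ∈ H₁)
    (hinv₂ : ∀ X : 𝔨, ∀ y ∈ H₂, π X y ∈ H₂)
    -- the momentum map on unit vectors
    (μ : H → 𝔨)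
    (hμ : ∀ Ψ : H, ‖Ψ‖ = 1 → ∀ X : 𝔨, ⟪μ Ψ, X⟫_ℝ = (⟪Ψ, π X Ψ⟫_ℂ / Complex.I).re) :
    μ '' {Ψ : H | ‖Ψ‖ = 1} =
      {Y : 𝔨 | ∃ t ∈ Set.Icc (0 : ℝ) 1,
        ∃ Ψ₁ ∈ H₁, ‖Ψ₁‖ = 1 ∧ ∃ Ψ₂ ∈ H₂, ‖Ψ₂‖ = 1 ∧
          Y = t • μ Ψ₁ + (1 - t) • μ Ψ₂} := by
  ext Y
  constructor
  · rintro ⟨Ψ, hΨ, rfl⟩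
    obtain ⟨x, hx, y, hy, rfl⟩ := Submodule.mem_sup.mp (hsum ▸ Submodule.mem_top : Ψ ∈ H₁ ⊔ H₂)
    have hnorm := norm_sq_add_norm_sq_of_norm_add_eq_one (hortho _ hx _ hy) hΨ
    obtain ⟨u₁, hu₁, n₁, hxu⟩ := Submodule.exists_norm_eq_one_and_eq_norm_smul hne₁ hx
    obtain ⟨u₂, hu₂, n₂, hyu⟩ := Submodule.exists_norm_eq_one_and_eq_norm_smul hne₂ hy
    refine ⟨‖x‖ ^ 2, ⟨by positivity, by linarith [sq_nonneg ‖y‖]⟩, u₁, hu₁, n₁, u₂, hu₂, n₂, ?_⟩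
    have hμxy :=
      momentum_ofReal_smul_add_ofReal_smul π hortho hinv₁ hinv₂ μ hμ hu₁ hu₂ n₁ n₂ hnorm
    rw [← hxu, ← hyu] at hμxy
    rw [hμxy, show 1 - ‖x‖ ^ 2 = ‖y‖ ^ 2 by linarith]
  · rintro ⟨t, ⟨ht₀, ht₁⟩, Ψ₁, h₁, n₁, Ψ₂, h₂, n₂, rfl⟩
    have hab : √t ^ 2 + √(1 - t) ^ 2 = 1 := by
      rw [Real.sq_sqrt ht₀, Real.sq_sqrt (by linarith)]; ring
    refine ⟨_, norm_ofReal_smul_add_ofReal_smul (hortho _ h₁ _ h₂) n₁ n₂ hab, ?_⟩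
    rw [momentum_ofReal_smul_add_ofReal_smul π hortho hinv₁ hinv₂ μ hμ h₁ h₂ n₁ n₂ hab,
      Real.sq_sqrt ht₀, Real.sq_sqrt (by linarith)]

theorem momentum_image_direct_sum_join
    {H : Type*} [NormedAddCommGroup H] [InnerProductSpace ℂ H] [FiniteDimensional ℂ H]
    {𝔨 : Type*} [NormedAddCommGroup 𝔨] [InnerProductSpace ℝ 𝔨] [FiniteDimensional ℝ 𝔨]
    -- the representation of the Lie algebra 𝔨 on H
    (π : 𝔨 →ₗ[ℝ] (H →ₗ[ℂ] H))
    -- two orthogonal, nonzero, invariant summands with H₁ ⊕ H₂ = H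
    (H₁ H₂ : Submodule ℂ H)
    (hne₁ : H₁ ≠ ⊥) (hne₂ : H₂ ≠ ⊥)
    (hortho : ∀ x ∈ H₁, ∀ y ∈ H₂, ⟪x, y⟫_ℂ = 0)
    (hsum : H₁ ⊔ H₂ = ⊤)
    (hinv₁ : ∀ X : 𝔨, ∀ x ∈ H₁, π X x ∈ H₁)
    (hinv₂ : ∀ X : 𝔨, ∀ y ∈ H₂, π X y ∈ H₂)
    -- the momentum map on unit vectors
    (μ : H → 𝔨)
    (hμ : ∀ Ψ : H, ‖Ψ‖ = 1 → ∀ X : 𝔨, ⟪μ Ψ, X⟫_ℝ = (⟪Ψ, π X Ψ⟫_ℂ / Complex.I).re) :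
    μ '' {Ψ : H | ‖Ψ‖ = 1} =
      {Y : 𝔨 | ∃ t ∈ Set.Icc (0 : ℝ) 1,
        ∃ Ψ₁ ∈ H₁, ‖Ψ₁‖ = 1 ∧ ∃ Ψ₂ ∈ H₂, ‖Ψ₂‖ = 1 ∧
          Y = t • μ Ψ₁ + (1 - t) • μ Ψ₂} :=
  momentum_image_direct_sum_join_general π H₁ H₂ hne₁ hne₂ hortho hsum hinv₁ hinv₂ μ hμ
end

section
/- For a system of L qubits, H = (ℂ²)^{⊗L}: a tuple of largest-eigenvalue-ordered local spectra (η₁^{(k)}, η₂^{(k)})_{k=1}^L with η₁^{(k)} ≥ η₂^{(k)}, η₁^{(k)}+η₂^{(k)}=1, satisfies the polygonal inequalities η₂^{(k)} ≤ Σ_{l≠k} η₂^{(l)} for all k if (η^{(k)}) lies in the cone at λ = ((1,0),…,(1,0)) over the convex hull of the doubly-excited weights λ_{i,j} (the weights of states with qubits i and j excited), intersected with the positive Weyl chamber; moreover every point of this cone-intersection satisfies these inequalities with equality attained on the faces. -/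
/- STATEMENT 14: L qubits.  Points of the cone at λ = ((1,0),…,(1,0)) over the convex hull
of the doubly-excited weights λ_{i,j}, intersected with the positive Weyl chamber
(η₁^{(k)} ≥ η₂^{(k)} ≥ 0), satisfy the polygonal inequalities
η₂^{(k)} ≤ Σ_{l≠k} η₂^{(l)} for every k.
Here λ_{i,j} (i < j) has k-th component (0,1) for k ∈ {i,j} and (1,0) otherwise; a point
of the cone is (1−t)λ + t Σ_{i<j} a_{i,j} λ_{i,j} with t ≥ 0, a_{i,j} ≥ 0, Σ a_{i,j} = 1,
which gives η₂^{(k)} = t·(Σ_j a_{k,j} + Σ_i a_{i,k}) and η₁^{(k)} = 1 − η₂^{(k)}. -/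

theorem qubits_polygonal_inequalities (L : ℕ)
    (t : ℝ) (ht : 0 ≤ t)
    (a : Fin L → Fin L → ℝ)
    (ha : ∀ i j, 0 ≤ a i j)
    (hsupp : ∀ i j : Fin L, ¬ i < j → a i j = 0)
    (hsum : ∑ i, ∑ j, a i j = 1)
    (η1 η2 : Fin L → ℝ)
    -- the point (η₁^{(k)}, η₂^{(k)})_k = (1−t)λ + t Σ_{i<j} a_{i,j} λ_{i,j}
    (hη2 : ∀ k, η2 k = t * ((∑ j, a k j) + (∑ i, a i k)))
    (hη1 : ∀ k, η1 k = 1 - η2 k)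
    -- the point lies in the positive Weyl chamber
    (hchamber : ∀ k, η2 k ≤ η1 k ∧ 0 ≤ η2 k) :
    ∀ k, η2 k ≤ ∑ l ∈ Finset.univ.erase k, η2 l := by
  intro k
  have hsum2 : ∑ l, η2 l = 2 * t := by
    simp only [hη2]
    rw [← Finset.mul_sum, Finset.sum_add_distrib]
    rw [show ∑ l, ∑ i, a i l = ∑ i, ∑ l, a i l from Finset.sum_comm]
    rw [hsum]
    ring
  have herase : ∑ l ∈ Finset.univ.erase k, η2 l = 2 * t - η2 k := by
    have := Finset.add_sum_erase Finset.univ η2 (Finset.mem_univ k)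
    linarith [hsum2, this]
  rw [herase]
  have hkt : η2 k ≤ t := by
    rw [hη2]
    have h1 : (∑ j, a k j) + (∑ i, a i k) ≤ 1 := by
      rw [← hsum]
      have hkk : a k k = 0 := hsupp k k (lt_irrefl k)
      have hsplit : ∑ i, ∑ j, a i j = (∑ j, a k j) + ∑ i ∈ Finset.univ.erase k, ∑ j, a i j := by
        rw [Finset.add_sum_erase Finset.univ (fun i => ∑ j, a i j) (Finset.mem_univ k)]
      rw [hsplit]
      have h2 : ∑ i, a i k ≤ ∑ i ∈ Finset.univ.erase k, ∑ j, a i j := by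
        rw [show ∑ i, a i k = ∑ i ∈ Finset.univ.erase k, a i k by
          rw [← Finset.add_sum_erase Finset.univ (fun i => a i k) (Finset.mem_univ k), hkk, zero_add]]
        apply Finset.sum_le_sum
        intro i _
        exact Finset.single_le_sum (fun j _ => ha i j) (Finset.mem_univ k)
      linarith
    calc t * ((∑ j, a k j) + (∑ i, a i k)) ≤ t * 1 := by
          exact mul_le_mul_of_nonneg_left h1 ht
      _ = t := mul_one t
  linarith
end

section
/- For three fermions on six levels, H = Λ³(ℂ⁶): the convex hull of the four weights η₁₂₃ = (1,1,1,0,0,0), η₁₄₅ = (1,0,0,1,1,0), η₂₄₆ = (0,1,0,1,0,1), η₃₅₆ = (0,0,1,0,1,1), intersected with the chamber {η₁ ≥ η₂ ≥ … ≥ η₆ ≥ 0}, is the polytope with vertices (1,1,1,0,0,0), (1,½,½,½,½,0), (¾,¾,½,½,¼,¼), and (½,½,½,½,½,½). -/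
lemma v6_0 (a b c d e f : ℝ) : ![a,b,c,d,e,f] 0 = a := rfl
lemma v6_1 (a b c d e f : ℝ) : ![a,b,c,d,e,f] 1 = b := rfl
lemma v6_2 (a b c d e f : ℝ) : ![a,b,c,d,e,f] 2 = c := rfl
lemma v6_3 (a b c d e f : ℝ) : ![a,b,c,d,e,f] 3 = d := rfl
lemma v6_4 (a b c d e f : ℝ) : ![a,b,c,d,e,f] 4 = e := rfl
lemma v6_5 (a b c d e f : ℝ) : ![a,b,c,d,e,f] 5 = f := rfl

lemma comb4_mem {S : Set (Fin 6 → ℝ)} {a b c d : Fin 6 → ℝ}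
    (ha : a ∈ S) (hb : b ∈ S) (hc : c ∈ S) (hd : d ∈ S)
    {t1 t2 t3 t4 : ℝ} (h1 : 0 ≤ t1) (h2 : 0 ≤ t2) (h3 : 0 ≤ t3) (h4 : 0 ≤ t4)
    (hs : t1 + t2 + t3 + t4 = 1) :
    t1 • a + t2 • b + t3 • c + t4 • d ∈ convexHull ℝ S := by
  have := Finset.centerMass_mem_convexHull (Finset.univ : Finset (Fin 4))
    (w := ![t1, t2, t3, t4]) (z := ![a, b, c, d])
    (by intro i _; fin_cases i <;> assumption)
    (by simp [Fin.sum_univ_four, hs])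
    (by intro i _; fin_cases i <;> assumption)
  simpa [Finset.centerMass, Fin.sum_univ_four, hs] using this

theorem three_fermions_six_levels_polytope :
    (convexHull ℝ
        ({![1, 1, 1, 0, 0, 0], ![1, 0, 0, 1, 1, 0], ![0, 1, 0, 1, 0, 1],
          ![0, 0, 1, 0, 1, 1]} : Set (Fin 6 → ℝ))) ∩
      {η : Fin 6 → ℝ | η 0 ≥ η 1 ∧ η 1 ≥ η 2 ∧ η 2 ≥ η 3 ∧ η 3 ≥ η 4 ∧ η 4 ≥ η 5 ∧ 0 ≤ η 5}
    = convexHull ℝ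
        ({![1, 1, 1, 0, 0, 0],
          ![1, 1/2, 1/2, 1/2, 1/2, 0],
          ![3/4, 3/4, 1/2, 1/2, 1/4, 1/4],
          ![1/2, 1/2, 1/2, 1/2, 1/2, 1/2]} : Set (Fin 6 → ℝ)) := by
  ext x
  constructor
  · rintro ⟨hx, h01, h12, h23, h34, h45, h5⟩
    rw [← convexJoin_segments, mem_convexJoin] at hx
    obtain ⟨p, ⟨a, b, ha, hb, hab, hp⟩, q, ⟨c, d, hc, hd, hcd, hq⟩, e, f, he, hf, hef, hx⟩ := hx
    have hxi : ∀ i, x i = e * (a * ![1,1,1,0,0,0] i + b * ![1,0,0,1,1,0] i)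
        + f * (c * ![0,1,0,1,0,1] i + d * ![0,0,1,0,1,1] i) := by
      intro i
      rw [← hx, ← hp, ← hq]
      simp only [Pi.add_apply, Pi.smul_apply, smul_eq_mul]
    have k23 : e*b + f*c ≤ e*a + f*d := by
      have := h23
      rw [hxi 2, hxi 3] at this
      simp only [v6_0, v6_1, v6_2, v6_3, v6_4, v6_5] at this
      linarith
    have k01 : f*c ≤ e*b := by
      have := h01
      rw [hxi 0, hxi 1] at this
      simp only [v6_0, v6_1, v6_2, v6_3, v6_4, v6_5] at this
      linarith
    have k12 : f*d ≤ f*c := by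
      have := h12
      rw [hxi 1, hxi 2] at this
      simp only [v6_0, v6_1, v6_2, v6_3, v6_4, v6_5] at this
      linarith
    have hfd : 0 ≤ f*d := mul_nonneg hf hd
    have key : (e*a + f*d - e*b - f*c) • (![1, 1, 1, 0, 0, 0] : Fin 6 → ℝ)
        + (2*(e*b - f*c)) • ![1, 1/2, 1/2, 1/2, 1/2, 0]
        + (4*(f*c - f*d)) • ![3/4, 3/4, 1/2, 1/2, 1/4, 1/4]
        + (4*(f*d)) • ![1/2, 1/2, 1/2, 1/2, 1/2, 1/2] = x := by
      funext i
      rw [hxi i]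
      fin_cases i <;>
        simp [v6_0, v6_1, v6_2, v6_3, v6_4, v6_5] <;> ring
    rw [← key]
    exact comb4_mem (by simp) (by simp) (by simp) (by simp)
      (by linarith) (by linarith) (by linarith) (by linarith)
      (by linear_combination e * hab + f * hcd + hef)
  · intro hx
    rw [← convexJoin_segments, mem_convexJoin] at hx
    obtain ⟨p, ⟨a, b, ha, hb, hab, hp⟩, q, ⟨c, d, hc, hd, hcd, hq⟩, e, f, he, hf, hef, hx⟩ := hx
    have hxi : ∀ i, x i = e * (a * ![1,1,1,0,0,0] i + b * ![1,(1:ℝ)/2,1/2,1/2,1/2,0] i)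
        + f * (c * ![(3:ℝ)/4,3/4,1/2,1/2,1/4,1/4] i + d * ![(1:ℝ)/2,1/2,1/2,1/2,1/2,1/2] i) := by
      intro i
      rw [← hx, ← hp, ← hq]
      simp only [Pi.add_apply, Pi.smul_apply, smul_eq_mul]
    have hea : 0 ≤ e*a := mul_nonneg he ha
    have heb : 0 ≤ e*b := mul_nonneg he hb
    have hfc : 0 ≤ f*c := mul_nonneg hf hc
    have hfd : 0 ≤ f*d := mul_nonneg hf hd
    constructor
    · have key : (e*a + e*b/2 + f*c/2 + f*d/4) • (![1, 1, 1, 0, 0, 0] : Fin 6 → ℝ)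
          + (e*b/2 + f*c/4 + f*d/4) • ![1, 0, 0, 1, 1, 0]
          + (f*c/4 + f*d/4) • ![0, 1, 0, 1, 0, 1]
          + (f*d/4) • ![0, 0, 1, 0, 1, 1] = x := by
        funext i
        rw [hxi i]
        fin_cases i <;>
          simp [v6_0, v6_1, v6_2, v6_3, v6_4, v6_5] <;> ring
      rw [← key]
      exact comb4_mem (by simp) (by simp) (by simp) (by simp)
        (by linarith) (by linarith) (by linarith) (by linarith)
        (by linear_combination e * hab + f * hcd + hef)
    · refine ⟨?_, ?_, ?_, ?_, ?_, ?_⟩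
      · rw [hxi 0, hxi 1]
        simp only [v6_0, v6_1, v6_2, v6_3, v6_4, v6_5]; linarith
      · rw [hxi 1, hxi 2]
        simp only [v6_0, v6_1, v6_2, v6_3, v6_4, v6_5]; linarith
      · rw [hxi 2, hxi 3]
        simp only [v6_0, v6_1, v6_2, v6_3, v6_4, v6_5]; linarith
      · rw [hxi 3, hxi 4]
        simp only [v6_0, v6_1, v6_2, v6_3, v6_4, v6_5]; linarith
      · rw [hxi 4, hxi 5]
        simp only [v6_0, v6_1, v6_2, v6_3, v6_4, v6_5]; linarith
      · rw [hxi 5]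
        simp only [v6_0, v6_1, v6_2, v6_3, v6_4, v6_5]; linarith
end
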